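/- The sequence (x_n)_{n≥1} defined by x_n := A_{n+2} is sub-Fibonacci: x_1 = x_2 = 1, x_n ≤ x_{n+1} for all n ≥ 1, and x_n ≤ x_{n−1} + x_{n−2} for all n ≥ 3; equivalently, A_3 = A_4 = 1, (A_{d})_{d≥3} is non-decreasing, and A_{n+2} ≤ A_{n+1} + A_n for every n ≥ 3. -/

import Mathlib

open scoped BigOperators

/-- The largest `k` such that `C(k,t) ≤ a` (used in the greedy binomial expansion). -/
def maxBinomIdx (a t : ℕ) : ℕ :=
  ((Finset.range (a + t + 1)).filter fun k => Nat.choose k t ≤ a).sup id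

/-- `a^{⟨t⟩}`, computed via the (unique, hence greedy) binomial expansion of `a` in base `t`:
if `a = C(k_t,t) + C(k_{t-1},t-1) + ⋯ + C(k_j,j)` with `k_t > ⋯ > k_j ≥ j ≥ 1`, then
`a^{⟨t⟩} = C(k_t+1,t+1) + ⋯ + C(k_j+1,j+1)`; by convention `0^{⟨t⟩} = 0`. -/
def macaulay : ℕ → ℕ → ℕ
  | _, 0 => 0
  | a, t + 1 =>
    if a = 0 then 0
    else
      Nat.choose (maxBinomIdx a (t + 1) + 1) (t + 2) +
        macaulay (a - Nat.choose (maxBinomIdx a (t + 1)) (t + 1)) t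

/-- A finite O-sequence: `h 0 = 1`, `h` vanishes after its first zero, `h` is eventually zero,
and `h (t+1) ≤ (h t)^{⟨t⟩}` for every `t ≥ 1`. -/
def IsFiniteOSeq (h : ℕ → ℕ) : Prop :=
  h 0 = 1 ∧ (∀ t, h t = 0 → h (t + 1) = 0) ∧ (∃ N, ∀ t, N ≤ t → h t = 0) ∧
    ∀ t, 1 ≤ t → h (t + 1) ≤ macaulay (h t) t

/-- The multiplicity (length) `d = Σ_t h t` of a finite O-sequence. -/
noncomputable def mult (h : ℕ → ℕ) : ℕ := ∑ᶠ t, h t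

/-- The socle degree `s = max {t : h t ≠ 0}` of a finite O-sequence. -/
noncomputable def socleDeg (h : ℕ → ℕ) : ℕ := sSup {t | h t ≠ 0}

/-- `countO p n k d = O(p,n,k,d)`: for `p ≥ 1`, `n ≥ 0`, `k ≥ 0`, `d ≥ 1`, the number of finite
O-sequences `h` of multiplicity `d` and socle degree at most `n` with `h i = C(p-1+i,i)` for
`0 ≤ i ≤ k` and `h i < C(p-1+i,i)` for `i > k`; moreover `O(0,n,0,1) = 1` for `n ≥ 0`,
`O(0,n,k,d) = 0` for `k > 0` or `d > 1`, and `O(p,n,k,d) = 0` if `p < 0`, `n < 0`, `k < 0`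
or `d ≤ 0`. -/
noncomputable def countO (p n k d : ℤ) : ℕ :=
  if 1 ≤ p ∧ 0 ≤ n ∧ 0 ≤ k ∧ 1 ≤ d then
    {h : ℕ → ℕ | IsFiniteOSeq h ∧ mult h = d.toNat ∧ socleDeg h ≤ n.toNat ∧
        (∀ i : ℕ, (i : ℤ) ≤ k → h i = Nat.choose (p.toNat - 1 + i) i) ∧
        (∀ i : ℕ, k < (i : ℤ) → h i < Nat.choose (p.toNat - 1 + i) i)}.ncard
  else if p = 0 ∧ 0 ≤ n ∧ k = 0 ∧ d = 1 then 1
  else 0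

/-- `O_d`: the number of finite O-sequences of multiplicity `d`. -/
noncomputable def countOd (d : ℕ) : ℕ :=
  {h : ℕ → ℕ | IsFiniteOSeq h ∧ mult h = d}.ncard

/-- `A_d`: the number of finite O-sequences of multiplicity `d` whose value at the socle degree
is at least `2`. -/
noncomputable def countAd (d : ℕ) : ℕ :=
  {h : ℕ → ℕ | IsFiniteOSeq h ∧ mult h = d ∧ 2 ≤ h (socleDeg h)}.ncard





lemma macaulay_zero (t : ℕ) : macaulay 0 t = 0 := by
  cases t <;> simp [macaulay]

lemma maxBinomIdx_one_right (a : ℕ) : maxBinomIdx a 1 = a := by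
  unfold maxBinomIdx
  apply le_antisymm
  · apply Finset.sup_le
    intro k hk
    simp only [Finset.mem_filter, Nat.choose_one_right] at hk
    exact hk.2
  · exact Finset.le_sup (f := id) (by simp [Nat.choose_one_right])

lemma macaulay_one_right (a : ℕ) : macaulay a 1 = Nat.choose (a + 1) 2 := by
  cases a with
  | zero => simp [macaulay]
  | succ n =>
    show macaulay (n+1) (0+1) = _
    rw [macaulay]
    simp [maxBinomIdx_one_right, macaulay]

lemma macaulay_one_left (t : ℕ) (ht : 1 ≤ t) : macaulay 1 t = 1 := by
  obtain ⟨u, rfl⟩ : ∃ u, t = u + 1 := ⟨t - 1, by omega⟩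
  have hidx : maxBinomIdx 1 (u + 1) = u + 1 := by
    unfold maxBinomIdx
    apply le_antisymm
    · apply Finset.sup_le
      intro k hk
      simp only [Finset.mem_filter, Finset.mem_range] at hk
      simp only [id_eq]
      by_contra hlt
      push_neg at hlt
      have hk2 : k = u + 2 := by omega
      subst hk2
      rw [show u + 2 = (u + 1) + 1 from rfl, Nat.choose_succ_self_right] at hk
      omega
    · exact Finset.le_sup (f := id) (by simp [Nat.choose_self])
  rw [macaulay, if_neg one_ne_zero, hidx]
  simp [Nat.choose_self, macaulay_zero]





section helpers
variable {h : ℕ → ℕ}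

lemma zero_of_le (hO : IsFiniteOSeq h) {t t' : ℕ} (htt : t ≤ t') (ht : h t = 0) : h t' = 0 := by
  induction t' with
  | zero => exact (Nat.le_zero.mp htt) ▸ ht
  | succ n ih =>
    rcases Nat.lt_or_ge t (n + 1) with hlt | hge
    · exact hO.2.1 n (ih (by omega))
    · have heq : t = n + 1 := by omega
      exact heq ▸ ht

lemma mult_eq_sum {N : ℕ} (hN : ∀ t, N ≤ t → h t = 0) :
    mult h = ∑ t ∈ Finset.range N, h t := by
  apply finsum_eq_sum_of_support_subset
  intro t ht
  simp only [Function.mem_support] at ht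
  simp only [Finset.coe_range, Set.mem_Iio]
  by_contra hc
  push_neg at hc
  exact ht (hN t hc)

lemma socle_bddAbove (hO : IsFiniteOSeq h) : BddAbove {t | h t ≠ 0} := by
  obtain ⟨N, hN⟩ := hO.2.2.1
  exact ⟨N, fun t ht => by by_contra hc; push_neg at hc; exact ht (hN t (by omega))⟩

lemma socle_mem (hO : IsFiniteOSeq h) : h (socleDeg h) ≠ 0 :=
  Nat.sSup_mem ⟨0, by simp [hO.1]⟩ (socle_bddAbove hO)

lemma le_socle (hO : IsFiniteOSeq h) {t : ℕ} (ht : h t ≠ 0) : t ≤ socleDeg h :=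
  le_csSup (socle_bddAbove hO) ht

lemma gt_socle (hO : IsFiniteOSeq h) {t : ℕ} (ht : socleDeg h < t) : h t = 0 := by
  by_contra hc
  exact absurd (le_socle hO hc) (by omega)

lemma ne_zero_of_le_socle (hO : IsFiniteOSeq h) {t : ℕ} (ht : t ≤ socleDeg h) : h t ≠ 0 :=
  fun h0 => socle_mem hO (zero_of_le hO ht h0)

lemma mult_update (hO : IsFiniteOSeq h) (i v : ℕ) :
    mult (Function.update h i v) + h i = mult h + v := by
  obtain ⟨N0, hN0⟩ := hO.2.2.1
  set N := max N0 (i + 1) with hNdef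
  have hN : ∀ t, N ≤ t → h t = 0 := fun t ht => hN0 t (by omega)
  have hN' : ∀ t, N ≤ t → Function.update h i v t = 0 := by
    intro t ht
    rw [Function.update_of_ne (by omega)]
    exact hN t ht
  rw [mult_eq_sum hN, mult_eq_sum hN']
  have hi : i ∈ Finset.range N := Finset.mem_range.mpr (by omega)
  rw [Finset.sum_update_of_mem hi, ← Finset.add_sum_erase _ h hi,
    Finset.sdiff_singleton_eq_erase]
  ring

lemma le_mult (hO : IsFiniteOSeq h) (t : ℕ) : h t ≤ mult h := by
  obtain ⟨N0, hN0⟩ := hO.2.2.1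
  have hN : ∀ u, max N0 (t + 1) ≤ u → h u = 0 := fun u hu => hN0 u (by omega)
  rw [mult_eq_sum hN]
  exact Finset.single_le_sum (fun i _ => Nat.zero_le _) (Finset.mem_range.mpr (by omega))

lemma mult_eq_sum_socle (hO : IsFiniteOSeq h) :
    mult h = ∑ t ∈ Finset.range (socleDeg h + 1), h t :=
  mult_eq_sum (fun t ht => gt_socle hO (by omega))

lemma socle_add_le_mult (hO : IsFiniteOSeq h) :
    socleDeg h + h (socleDeg h) ≤ mult h := by
  rw [mult_eq_sum_socle hO, Finset.sum_range_succ]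
  have : socleDeg h ≤ ∑ t ∈ Finset.range (socleDeg h), h t := by
    calc socleDeg h = ∑ _t ∈ Finset.range (socleDeg h), 1 := by simp
      _ ≤ _ := Finset.sum_le_sum fun i hi =>
          Nat.one_le_iff_ne_zero.mpr (ne_zero_of_le_socle hO (by
            simp only [Finset.mem_range] at hi; omega))
  omega

lemma socle_update_of_ne (hO : IsFiniteOSeq h) {i v : ℕ} (hv : v ≠ 0) (hi : h i ≠ 0) :
    socleDeg (Function.update h i v) = socleDeg h := by
  unfold socleDeg
  congr 1
  ext t
  by_cases hti : t = i
  · subst hti; simp [hv, hi]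
  · simp [Function.update_of_ne hti]

lemma setA_finite (d : ℕ) :
    {h : ℕ → ℕ | IsFiniteOSeq h ∧ mult h = d ∧ 2 ≤ h (socleDeg h)}.Finite := by
  apply Set.Finite.subset (Set.finite_range
    (fun (g : Fin (d + 1) → Fin (d + 1)) (t : ℕ) =>
      if ht : t < d + 1 then (g ⟨t, ht⟩ : ℕ) else 0))
  rintro h ⟨hO, hm, -⟩
  have hle : ∀ t, h t ≤ d := fun t => hm ▸ le_mult hO t
  have hslt : socleDeg h < d + 1 := by
    have := socle_add_le_mult hO
    have h0 : h (socleDeg h) ≠ 0 := socle_mem hO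
    omega
  refine ⟨fun i => ⟨h i, by have := hle i; omega⟩, ?_⟩
  funext t
  by_cases ht : t < d + 1
  · simp [ht]
  · simp only [ht, dif_neg, not_false_iff]
    exact (gt_socle hO (by omega)).symm

end helpers
/-- The O-sequence `1, c, 0, 0, …`. -/
def seq2 (c : ℕ) : ℕ → ℕ := fun t => if t = 0 then 1 else if t = 1 then c else 0

lemma seq2_oseq {c : ℕ} (hc : 1 ≤ c) : IsFiniteOSeq (seq2 c) := by
  refine ⟨rfl, ?_, ⟨2, ?_⟩, ?_⟩
  · intro t ht
    match t with
    | 0 => simp [seq2] at ht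
    | 1 => simp [seq2] at ht; omega
    | n + 2 => simp [seq2]
  · intro t ht
    have h1 : t ≠ 0 := by omega
    have h2 : t ≠ 1 := by omega
    simp [seq2, h1, h2]
  · intro t ht
    have h1 : t + 1 ≠ 0 := by omega
    have h2 : t + 1 ≠ 1 := by omega
    simp [seq2, h1, h2, show t ≠ 0 by omega]

lemma seq2_socle {c : ℕ} (hc : 1 ≤ c) : socleDeg (seq2 c) = 1 := by
  apply le_antisymm
  · apply csSup_le ⟨0, by simp [seq2]⟩
    intro t ht
    simp only [Set.mem_setOf_eq, seq2] at ht
    by_contra hgt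
    push_neg at hgt
    have h1 : t ≠ 0 := by omega
    have h2 : t ≠ 1 := by omega
    simp [h1, h2] at ht
  · apply le_csSup (socle_bddAbove (seq2_oseq hc))
    simp only [Set.mem_setOf_eq, seq2]
    simp; omega

lemma seq2_mult {c : ℕ} : mult (seq2 c) = 1 + c := by
  rw [mult_eq_sum (N := 2) (by intro t ht; have h1 : t ≠ 0 := by omega
                               have h2 : t ≠ 1 := by omega
                               simp [seq2, h1, h2])]
  simp [Finset.sum_range_succ, seq2]

lemma seq2_memA {c : ℕ} (hc : 2 ≤ c) :
    seq2 c ∈ {h : ℕ → ℕ | IsFiniteOSeq h ∧ mult h = 1 + c ∧ 2 ≤ h (socleDeg h)} := by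
  refine ⟨seq2_oseq (by omega), seq2_mult, ?_⟩
  rw [seq2_socle (by omega)]
  simp [seq2, hc]

lemma setA_three :
    {h : ℕ → ℕ | IsFiniteOSeq h ∧ mult h = 3 ∧ 2 ≤ h (socleDeg h)} = {seq2 2} := by
  ext h
  simp only [Set.mem_setOf_eq, Set.mem_singleton_iff]
  constructor
  · rintro ⟨hO, hm, hs2⟩
    set s := socleDeg h with hsdef
    have hsle : s + h s ≤ 3 := hm ▸ socle_add_le_mult hO
    have hs0 : s ≠ 0 := by intro h0; rw [h0, hO.1] at hs2; omega
    have hs1 : s = 1 := by omega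
    have hval : h s = 2 := by omega
    funext t
    match t with
    | 0 => simpa [seq2] using hO.1
    | 1 =>
      have hv : h 1 = 2 := by rw [← hs1]; exact hval
      simp [seq2, hv]
    | n + 2 => simp only [seq2]; simp; exact gt_socle hO (by omega)
  · rintro rfl
    exact seq2_memA (by norm_num)

lemma setA_four :
    {h : ℕ → ℕ | IsFiniteOSeq h ∧ mult h = 4 ∧ 2 ≤ h (socleDeg h)} = {seq2 3} := by
  ext h
  simp only [Set.mem_setOf_eq, Set.mem_singleton_iff]
  constructor
  · rintro ⟨hO, hm, hs2⟩
    set s := socleDeg h with hsdef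
    have hsle : s + h s ≤ 4 := hm ▸ socle_add_le_mult hO
    have hs0 : s ≠ 0 := by intro h0; rw [h0, hO.1] at hs2; omega
    have hs12 : s = 1 ∨ s = 2 := by omega
    have hs1 : s = 1 := by
      rcases hs12 with hs1 | hs2'
      · exact hs1
      · exfalso
        -- s = 2 : then h 1 = 1 and h 2 = 2, violating Macaulay bound
        have hsum : mult h = h 0 + h 1 + h 2 := by
          rw [mult_eq_sum_socle hO, ← hsdef, hs2']
          simp [Finset.sum_range_succ]
        have h1ne : h 1 ≠ 0 := ne_zero_of_le_socle hO (by omega)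
        have hhs : 2 ≤ h 2 := hs2' ▸ hs2
        rw [hs2'] at hsle
        have hv2 : h 2 = 2 := by omega
        have hv1 : h 1 = 1 := by rw [hO.1] at hsum; omega
        have := hO.2.2.2 1 le_rfl
        rw [hv1, hv2, macaulay_one_left 1 le_rfl] at this
        omega
    have hval : h 1 = 3 := by
      have hsum : mult h = h 0 + h 1 := by
        rw [mult_eq_sum_socle hO, ← hsdef, hs1]
        simp [Finset.sum_range_succ]
      rw [hO.1] at hsum; omega
    funext t
    match t with
    | 0 => simpa [seq2] using hO.1
    | 1 => simpa [seq2] using hval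
    | n + 2 => simp only [seq2]; simp; exact gt_socle hO (by omega)
  · rintro rfl
    exact seq2_memA (by norm_num)
lemma countAd_mono_aux (d : ℕ) (hd : 3 ≤ d) :
    {h : ℕ → ℕ | IsFiniteOSeq h ∧ mult h = d ∧ 2 ≤ h (socleDeg h)}.ncard ≤
    {h : ℕ → ℕ | IsFiniteOSeq h ∧ mult h = d + 1 ∧ 2 ≤ h (socleDeg h)}.ncard := by
  refine Set.ncard_le_ncard_of_injOn (fun h => Function.update h 1 (h 1 + 1)) ?_ ?_
    (setA_finite (d + 1))
  · rintro h ⟨hO, hm, hs2⟩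
    simp only [Set.mem_setOf_eq]
    have h1ne : h 1 ≠ 0 := by
      intro h10
      have hm1 : mult h = 1 := by
        rw [mult_eq_sum (N := 1) (fun t ht => zero_of_le hO (by omega) h10)]
        simp [hO.1]
      omega
    obtain ⟨N0, hN0⟩ := hO.2.2.1
    have hO' : IsFiniteOSeq (Function.update h 1 (h 1 + 1)) := by
      refine ⟨?_, ?_, ⟨max N0 2, ?_⟩, ?_⟩
      · rw [Function.update_of_ne (by omega)]; exact hO.1
      · intro t ht
        match t with
        | 0 => rw [Function.update_of_ne (by omega), hO.1] at ht; omega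
        | 1 => rw [Function.update_self] at ht; omega
        | n + 2 =>
          rw [Function.update_of_ne (by omega)] at ht
          rw [Function.update_of_ne (by omega)]
          exact hO.2.1 _ ht
      · intro t ht
        rw [Function.update_of_ne (by omega)]
        exact hN0 t (by omega)
      · intro t ht
        match t with
        | 1 =>
          rw [Function.update_of_ne (by omega), Function.update_self]
          calc h 2 ≤ macaulay (h 1) 1 := hO.2.2.2 1 le_rfl
            _ ≤ macaulay (h 1 + 1) 1 := by
                rw [macaulay_one_right, macaulay_one_right]
                exact Nat.choose_le_choose 2 (by omega)
        | n + 2 =>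
          rw [Function.update_of_ne (by omega), Function.update_of_ne (by omega)]
          exact hO.2.2.2 _ (by omega)
    have hsoc : socleDeg (Function.update h 1 (h 1 + 1)) = socleDeg h :=
      socle_update_of_ne hO (by omega) h1ne
    refine ⟨hO', ?_, ?_⟩
    · have := mult_update hO 1 (h 1 + 1)
      omega
    · rw [hsoc]
      by_cases hs1 : socleDeg h = 1
      · rw [hs1, Function.update_self]; rw [hs1] at hs2; omega
      · rw [Function.update_of_ne hs1]; exact hs2
  · rintro h - g - heq
    funext t
    by_cases ht : t = 1
    · subst ht
      have h1 := congrFun heq 1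
      dsimp only at h1
      simp only [Function.update_self] at h1
      omega
    · have h1 := congrFun heq t
      dsimp only at h1
      rwa [Function.update_of_ne ht, Function.update_of_ne ht] at h1

lemma socle_update_zero {h : ℕ → ℕ} (hO : IsFiniteOSeq h) (hs1 : 1 ≤ socleDeg h) :
    socleDeg (Function.update h (socleDeg h) 0) = socleDeg h - 1 := by
  apply le_antisymm
  · apply csSup_le ⟨0, by
      simp only [Set.mem_setOf_eq]
      rw [Function.update_of_ne (by omega), hO.1]; omega⟩
    intro t ht
    simp only [Set.mem_setOf_eq] at ht
    by_cases hts : t = socleDeg h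
    · rw [hts, Function.update_self] at ht; omega
    · rw [Function.update_of_ne hts] at ht
      have := le_socle hO ht
      omega
  · apply le_csSup
    · obtain ⟨N, hN⟩ := hO.2.2.1
      refine ⟨N, fun t ht => ?_⟩
      simp only [Set.mem_setOf_eq] at ht
      by_contra hc
      push_neg at hc
      by_cases hts : t = socleDeg h
      · rw [hts, Function.update_self] at ht; omega
      · rw [Function.update_of_ne hts] at ht; exact ht (hN t (by omega))
    · simp only [Set.mem_setOf_eq]
      rw [Function.update_of_ne (by omega)]
      exact ne_zero_of_le_socle hO (by omega)

lemma inj3_lemma (n : ℕ) (hn : 3 ≤ n) :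
  ({h : ℕ → ℕ | IsFiniteOSeq h ∧ mult h = n + 2 ∧ 2 ≤ h (socleDeg h)} ∩
    {h : ℕ → ℕ | 3 ≤ h (socleDeg h)}).ncard ≤
    {h : ℕ → ℕ | IsFiniteOSeq h ∧ mult h = n + 1 ∧ 2 ≤ h (socleDeg h)}.ncard := by
  refine Set.ncard_le_ncard_of_injOn
    (fun h => Function.update h (socleDeg h) (h (socleDeg h) - 1)) ?_ ?_
    (setA_finite (n + 1))
  · rintro h ⟨⟨hO, hm, -⟩, h3⟩
    simp only [Set.mem_setOf_eq] at h3 ⊢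
    have hs0 : socleDeg h ≠ 0 := fun h0 => by rw [h0, hO.1] at h3; omega
    obtain ⟨N0, hN0⟩ := hO.2.2.1
    have hOs : IsFiniteOSeq (Function.update h (socleDeg h) (h (socleDeg h) - 1)) := by
      refine ⟨?_, ?_, ⟨max N0 (socleDeg h + 1), ?_⟩, ?_⟩
      · rw [Function.update_of_ne (by omega)]; exact hO.1
      · intro t ht
        by_cases ht1s : t + 1 = socleDeg h
        · exfalso
          by_cases hts : t = socleDeg h
          · omega
          · rw [Function.update_of_ne hts] at ht
            exact ne_zero_of_le_socle hO (by omega) ht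
        · rw [Function.update_of_ne ht1s]
          by_cases hts : t = socleDeg h
          · exact gt_socle hO (by omega)
          · rw [Function.update_of_ne hts] at ht
            exact hO.2.1 t ht
      · intro t ht
        rw [Function.update_of_ne (by omega)]
        exact hN0 t (by omega)
      · intro t ht1
        by_cases ht1s : t + 1 = socleDeg h
        · rw [ht1s, Function.update_self, Function.update_of_ne (by omega)]
          have hmac := hO.2.2.2 t ht1
          rw [ht1s] at hmac
          exact le_trans (Nat.sub_le _ _) hmac
        · rw [Function.update_of_ne ht1s]
          by_cases hts : t = socleDeg h
          · rw [gt_socle hO (by omega : socleDeg h < t + 1)]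
            exact Nat.zero_le _
          · rw [Function.update_of_ne hts]
            exact hO.2.2.2 t ht1
    have hsoc : socleDeg (Function.update h (socleDeg h) (h (socleDeg h) - 1)) = socleDeg h :=
      socle_update_of_ne hO (by omega) (socle_mem hO)
    refine ⟨hOs, ?_, ?_⟩
    · have := mult_update hO (socleDeg h) (h (socleDeg h) - 1)
      omega
    · rw [hsoc, Function.update_self]
      omega
  · rintro h ⟨⟨hO, -, -⟩, h3⟩ g ⟨⟨hOg, -, -⟩, g3⟩ heq
    simp only [Set.mem_setOf_eq] at h3 g3
    have hs : socleDeg (Function.update h (socleDeg h) (h (socleDeg h) - 1)) = socleDeg h :=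
      socle_update_of_ne hO (by omega) (socle_mem hO)
    have hg : socleDeg (Function.update g (socleDeg g) (g (socleDeg g) - 1)) = socleDeg g :=
      socle_update_of_ne hOg (by omega) (socle_mem hOg)
    have hsg : socleDeg h = socleDeg g := by
      rw [← hs, ← hg]
      dsimp only at heq
      rw [heq]
    funext t
    by_cases hts : t = socleDeg h
    · have h1 := congrFun heq t
      dsimp only at h1
      rw [hts] at h1 ⊢
      rw [hsg] at h1 h3 ⊢
      rw [Function.update_self, Function.update_self] at h1
      omega
    · have h1 := congrFun heq t
      dsimp only at h1
      rw [Function.update_of_ne hts,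
        Function.update_of_ne (by rw [← hsg]; exact hts)] at h1
      exact h1

lemma inj2_lemma (n : ℕ) (hn : 3 ≤ n) :
  ({h : ℕ → ℕ | IsFiniteOSeq h ∧ mult h = n + 2 ∧ 2 ≤ h (socleDeg h)} ∩
    {h : ℕ → ℕ | h (socleDeg h) = 2}).ncard ≤
    {h : ℕ → ℕ | IsFiniteOSeq h ∧ mult h = n ∧ 2 ≤ h (socleDeg h)}.ncard := by
  refine Set.ncard_le_ncard_of_injOn (fun h => Function.update h (socleDeg h) 0) ?_ ?_
    (setA_finite n)
  · rintro h ⟨⟨hO, hm, -⟩, h2⟩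
    simp only [Set.mem_setOf_eq] at h2 ⊢
    have hs0 : socleDeg h ≠ 0 := fun h0 => by rw [h0, hO.1] at h2; omega
    have hs2 : 2 ≤ socleDeg h := by
      by_contra hc
      push_neg at hc
      have hs1eq : socleDeg h = 1 := by omega
      have hmm : mult h = h 0 + h 1 := by
        rw [mult_eq_sum_socle hO, hs1eq]
        simp [Finset.sum_range_succ]
      rw [hs1eq] at h2
      rw [hO.1] at hmm
      omega
    have hprev : 2 ≤ h (socleDeg h - 1) := by
      have hmac := hO.2.2.2 (socleDeg h - 1) (by omega)
      rw [show socleDeg h - 1 + 1 = socleDeg h by omega] at hmac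
      have hne : h (socleDeg h - 1) ≠ 0 := ne_zero_of_le_socle hO (by omega)
      by_contra hlt
      push_neg at hlt
      have h1 : h (socleDeg h - 1) = 1 := by omega
      rw [h1, macaulay_one_left _ (by omega), h2] at hmac
      omega
    obtain ⟨N0, hN0⟩ := hO.2.2.1
    have hOs : IsFiniteOSeq (Function.update h (socleDeg h) 0) := by
      refine ⟨?_, ?_, ⟨max N0 (socleDeg h + 1), ?_⟩, ?_⟩
      · rw [Function.update_of_ne (by omega)]; exact hO.1
      · intro t ht
        by_cases ht1s : t + 1 = socleDeg h
        · rw [ht1s, Function.update_self]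
        · rw [Function.update_of_ne ht1s]
          by_cases hts : t = socleDeg h
          · exact gt_socle hO (by omega)
          · rw [Function.update_of_ne hts] at ht
            exact hO.2.1 t ht
      · intro t ht
        rw [Function.update_of_ne (by omega)]
        exact hN0 t (by omega)
      · intro t ht1
        by_cases ht1s : t + 1 = socleDeg h
        · rw [ht1s, Function.update_self]
          exact Nat.zero_le _
        · rw [Function.update_of_ne ht1s]
          by_cases hts : t = socleDeg h
          · rw [gt_socle hO (by omega : socleDeg h < t + 1)]
            exact Nat.zero_le _
          · rw [Function.update_of_ne hts]
            exact hO.2.2.2 t ht1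
    have hsoc : socleDeg (Function.update h (socleDeg h) 0) = socleDeg h - 1 :=
      socle_update_zero hO (by omega)
    refine ⟨hOs, ?_, ?_⟩
    · have := mult_update hO (socleDeg h) 0
      omega
    · rw [hsoc, Function.update_of_ne (by omega)]
      exact hprev
  · rintro h ⟨⟨hO, -, -⟩, h2⟩ g ⟨⟨hOg, -, -⟩, g2⟩ heq
    simp only [Set.mem_setOf_eq] at h2 g2
    have hs0 : socleDeg h ≠ 0 := fun e => by rw [e, hO.1] at h2; omega
    have hg0 : socleDeg g ≠ 0 := fun e => by rw [e, hOg.1] at g2; omega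
    have hs : socleDeg (Function.update h (socleDeg h) 0) = socleDeg h - 1 :=
      socle_update_zero hO (by omega)
    have hg : socleDeg (Function.update g (socleDeg g) 0) = socleDeg g - 1 :=
      socle_update_zero hOg (by omega)
    have hsg : socleDeg h = socleDeg g := by
      dsimp only at heq
      rw [heq, hg] at hs
      omega
    funext t
    by_cases hts : t = socleDeg h
    · rw [hts, h2, hsg, g2]
    · have h1 := congrFun heq t
      dsimp only at h1
      rw [Function.update_of_ne hts,
        Function.update_of_ne (by rw [← hsg]; exact hts)] at h1
      exact h1

lemma countAd_subfib_aux (n : ℕ) (hn : 3 ≤ n) :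
    {h : ℕ → ℕ | IsFiniteOSeq h ∧ mult h = n + 2 ∧ 2 ≤ h (socleDeg h)}.ncard ≤
    {h : ℕ → ℕ | IsFiniteOSeq h ∧ mult h = n + 1 ∧ 2 ≤ h (socleDeg h)}.ncard +
    {h : ℕ → ℕ | IsFiniteOSeq h ∧ mult h = n ∧ 2 ≤ h (socleDeg h)}.ncard := by
  have hsplit :
      {h : ℕ → ℕ | IsFiniteOSeq h ∧ mult h = n + 2 ∧ 2 ≤ h (socleDeg h)} =
      ({h : ℕ → ℕ | IsFiniteOSeq h ∧ mult h = n + 2 ∧ 2 ≤ h (socleDeg h)} ∩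
        {h : ℕ → ℕ | 3 ≤ h (socleDeg h)}) ∪
      ({h : ℕ → ℕ | IsFiniteOSeq h ∧ mult h = n + 2 ∧ 2 ≤ h (socleDeg h)} ∩
        {h : ℕ → ℕ | h (socleDeg h) = 2}) := by
    ext h
    simp only [Set.mem_union, Set.mem_inter_iff, Set.mem_setOf_eq]
    constructor
    · rintro ⟨hO, hm, hs⟩
      by_cases h3 : 3 ≤ h (socleDeg h)
      · exact Or.inl ⟨⟨hO, hm, hs⟩, h3⟩
      · exact Or.inr ⟨⟨hO, hm, hs⟩, by omega⟩
    · rintro (⟨hmem, -⟩ | ⟨hmem, -⟩) <;> exact hmem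
  calc {h : ℕ → ℕ | IsFiniteOSeq h ∧ mult h = n + 2 ∧ 2 ≤ h (socleDeg h)}.ncard
      = (({h : ℕ → ℕ | IsFiniteOSeq h ∧ mult h = n + 2 ∧ 2 ≤ h (socleDeg h)} ∩
          {h : ℕ → ℕ | 3 ≤ h (socleDeg h)}) ∪
        ({h : ℕ → ℕ | IsFiniteOSeq h ∧ mult h = n + 2 ∧ 2 ≤ h (socleDeg h)} ∩
          {h : ℕ → ℕ | h (socleDeg h) = 2})).ncard := by rw [← hsplit]
    _ ≤ _ + _ := Set.ncard_union_le _ _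
    _ ≤ _ := Nat.add_le_add (inj3_lemma n hn) (inj2_lemma n hn)

/-- The sequence `x_n := A_{n+2}` (for `n ≥ 1`) is sub-Fibonacci:
`x_1 = x_2 = 1`, `x_n ≤ x_{n+1}` for all `n ≥ 1`, and `x_n ≤ x_{n−1} + x_{n−2}` for all
`n ≥ 3`; equivalently, `A_3 = A_4 = 1`, `(A_d)_{d≥3}` is non-decreasing, and
`A_{n+2} ≤ A_{n+1} + A_n` for every `n ≥ 3`. -/
theorem stmt14 :
    countAd 3 = 1 ∧ countAd 4 = 1 ∧
      (∀ d : ℕ, 3 ≤ d → countAd d ≤ countAd (d + 1)) ∧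
      ∀ n : ℕ, 3 ≤ n → countAd (n + 2) ≤ countAd (n + 1) + countAd n := by
  refine ⟨?_, ?_, fun d hd => countAd_mono_aux d hd, fun n hn => countAd_subfib_aux n hn⟩
  · unfold countAd
    rw [setA_three]
    exact Set.ncard_singleton _
  · unfold countAd
    rw [setA_four]
    exact Set.ncard_singleton _
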